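/- arXiv:2211.15843 — 4 statements merged into one kernel-verified Lean document; each statement's English description precedes it below -/
import Mathlib

section
/- Let n and β be positive integers with β ≥ 2, and let λ be a real with 0 ≤ λ < 1 and (1−λ)·β ≤ β − 1. Let V be a vertex set with |V| = n and let H₀, H₁, …, H_T be a sequence of simple graphs on V such that H₀ has no edges and, for each t < T, the graph H_{t+1} is obtained from H_t by performing exactly one of the following legal moves: (i) deleting an edge (u,v) of H_t with deg_{H_t}(u) + deg_{H_t}(v) > β, or (ii) adding an edge (u,v) not in H_t with deg_{H_t}(u) + deg_{H_t}(v) < (1−λ)·β. Then T ≤ n·β². -/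
open SimpleGraph

/-- The degree of a vertex `v` in a simple graph `H`. -/
noncomputable def degN {V : Type*} [Fintype V] (H : SimpleGraph V) (v : V) : ℕ :=
  (H.neighborSet v).ncard

section Aux
variable {V : Type*} [Fintype V]

lemma degN_delete_left (H : SimpleGraph V) {u v : V} (h : H.Adj u v) :
    degN (H.deleteEdges {s(u, v)}) u + 1 = degN H u := by
  have hset : (H.deleteEdges {s(u, v)}).neighborSet u = H.neighborSet u \ {v} := by
    ext w
    simp only [mem_neighborSet, deleteEdges_adj, Set.mem_diff, Set.mem_singleton_iff,
      Sym2.eq_iff]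
    have : ¬ H.Adj u u := H.irrefl
    aesop
  rw [degN, degN, hset]
  exact Set.ncard_diff_singleton_add_one h

lemma degN_delete_other (H : SimpleGraph V) {u v w : V} (hwu : w ≠ u) (hwv : w ≠ v) :
    degN (H.deleteEdges {s(u, v)}) w = degN H w := by
  have hset : (H.deleteEdges {s(u, v)}).neighborSet w = H.neighborSet w := by
    ext b
    simp only [mem_neighborSet, deleteEdges_adj, Set.mem_singleton_iff, Sym2.eq_iff]
    aesop
  rw [degN, degN, hset]

lemma degN_insert_left (H : SimpleGraph V) {u v : V} (hne : u ≠ v) (h : ¬ H.Adj u v) :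
    degN (H ⊔ fromEdgeSet {s(u, v)}) u = degN H u + 1 := by
  have hset : (H ⊔ fromEdgeSet {s(u, v)}).neighborSet u = insert v (H.neighborSet u) := by
    ext w
    simp only [mem_neighborSet, sup_adj, fromEdgeSet_adj, Set.mem_singleton_iff,
      Set.mem_insert_iff, Sym2.eq_iff]
    aesop
  rw [degN, degN, hset]
  exact Set.ncard_insert_of_notMem h

lemma degN_insert_other (H : SimpleGraph V) {u v w : V} (hwu : w ≠ u) (hwv : w ≠ v) :
    degN (H ⊔ fromEdgeSet {s(u, v)}) w = degN H w := by
  have hset : (H ⊔ fromEdgeSet {s(u, v)}).neighborSet w = H.neighborSet w := by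
    ext b
    simp only [mem_neighborSet, sup_adj, fromEdgeSet_adj, Set.mem_singleton_iff, Sym2.eq_iff]
    aesop
  rw [degN, degN, hset]

/-- potential -/
noncomputable def psiF (β : ℕ) (H : SimpleGraph V) (v : V) : ℤ :=
  (2 * β - 1) * (degN H v : ℤ) - 2 * (degN H v : ℤ) ^ 2

noncomputable def psi (β : ℕ) (H : SimpleGraph V) : ℤ := ∑ v : V, psiF β H v

lemma psi_diff_two (β : ℕ) (G G' : SimpleGraph V) {u v : V} (hne : u ≠ v)
    (hw : ∀ w, w ≠ u → w ≠ v → degN G' w = degN G w)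
    (hg : psiF β G' u - psiF β G u + (psiF β G' v - psiF β G v) ≥ 2) :
    psi β G + 2 ≤ psi β G' := by
  classical
  have hdiff : psi β G' - psi β G = ∑ w : V, (psiF β G' w - psiF β G w) := by
    rw [psi, psi, Finset.sum_sub_distrib]
  have hsub : ({u, v} : Finset V) ⊆ Finset.univ := Finset.subset_univ _
  have := Finset.sum_sdiff (f := fun w => psiF β G' w - psiF β G w) hsub
  have hz : ∑ w ∈ Finset.univ \ {u, v}, (psiF β G' w - psiF β G w) = 0 := by
    apply Finset.sum_eq_zero
    intro w hwmem
    simp only [Finset.mem_sdiff, Finset.mem_insert, Finset.mem_singleton] at hwmem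
    push_neg at hwmem
    rw [psiF, psiF, hw w hwmem.2.1 hwmem.2.2]
    ring
  have hpair : ∑ w ∈ ({u, v} : Finset V), (psiF β G' w - psiF β G w)
      = psiF β G' u - psiF β G u + (psiF β G' v - psiF β G v) :=
    Finset.sum_pair hne
  linarith [hdiff, this, hz, hpair, hg]
  
end Aux

/-- Lemma 4.2 of Bernstein et al.: starting from the empty graph on `n` vertices, any
sequence of legal moves — deleting an edge of edge-degree greater than `β`, or inserting
an edge of edge-degree less than `(1−λ)·β` — has length at most `n·β²`. -/
theorem edcs_number_of_moves_bound
    {V : Type*} [Fintype V] (n β T : ℕ) (hn : 0 < n) (hβ : 2 ≤ β)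
    (lam : ℝ) (hlam0 : 0 ≤ lam) (hlam1 : lam < 1)
    (hlamβ : (1 - lam) * (β : ℝ) ≤ (β : ℝ) - 1)
    (hcard : Fintype.card V = n)
    (H : ℕ → SimpleGraph V)
    (h0 : H 0 = ⊥)
    (hstep : ∀ t < T,
      (∃ u v : V, (H t).Adj u v ∧ β < degN (H t) u + degN (H t) v ∧
        H (t + 1) = (H t).deleteEdges {s(u, v)}) ∨
      (∃ u v : V, u ≠ v ∧ ¬ (H t).Adj u v ∧
        ((degN (H t) u : ℝ) + (degN (H t) v : ℝ)) < (1 - lam) * β ∧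
        H (t + 1) = H t ⊔ fromEdgeSet {s(u, v)})) :
    T ≤ n * β ^ 2 := by
  -- each step increases psi by at least 2
  have key : ∀ t < T, psi β (H t) + 2 ≤ psi β (H (t + 1)) := by
    intro t ht
    rcases hstep t ht with ⟨u, v, hadj, hdeg, hEq⟩ | ⟨u, v, hne, hnadj, hdeg, hEq⟩
    · have hne : u ≠ v := hadj.ne
      apply psi_diff_two β (H t) (H (t + 1)) hne
      · intro w hwu hwv
        rw [hEq]; exact degN_delete_other _ hwu hwv
      · have hu : degN (H (t + 1)) u + 1 = degN (H t) u := by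
          rw [hEq]; exact degN_delete_left _ hadj
        have hv : degN (H (t + 1)) v + 1 = degN (H t) v := by
          rw [hEq]
          have := degN_delete_left (H t) hadj.symm
          rw [Sym2.eq_swap] at this
          exact this
        simp only [psiF]
        have hu' : (degN (H (t+1)) u : ℤ) + 1 = (degN (H t) u : ℤ) := by exact_mod_cast hu
        have hv' : (degN (H (t+1)) v : ℤ) + 1 = (degN (H t) v : ℤ) := by exact_mod_cast hv
        have hdeg' : (β : ℤ) < (degN (H t) u : ℤ) + (degN (H t) v : ℤ) := by exact_mod_cast hdeg
        nlinarith [hu', hv', hdeg']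
    · apply psi_diff_two β (H t) (H (t + 1)) hne
      · intro w hwu hwv
        rw [hEq]; exact degN_insert_other _ hwu hwv
      · have hu : degN (H (t + 1)) u = degN (H t) u + 1 := by
          rw [hEq]; exact degN_insert_left _ hne hnadj
        have hv : degN (H (t + 1)) v = degN (H t) v + 1 := by
          rw [hEq]
          have := degN_insert_left (H t) hne.symm (fun h => hnadj h.symm)
          rw [Sym2.eq_swap] at this
          exact this
        have hsmall : degN (H t) u + degN (H t) v + 1 < β := by
          have : ((degN (H t) u + degN (H t) v + 1 : ℕ) : ℝ) < (β : ℝ) := by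
            push_cast
            linarith [lt_of_lt_of_le hdeg hlamβ]
          exact_mod_cast this
        simp only [psiF]
        have hu' : (degN (H (t+1)) u : ℤ) = (degN (H t) u : ℤ) + 1 := by exact_mod_cast hu
        have hv' : (degN (H (t+1)) v : ℤ) = (degN (H t) v : ℤ) + 1 := by exact_mod_cast hv
        have hsmall' : (degN (H t) u : ℤ) + (degN (H t) v : ℤ) + 1 < (β : ℤ) := by
          exact_mod_cast hsmall
        nlinarith [hu', hv', hsmall']
  -- psi (H 0) = 0
  have hpsi0 : psi β (H 0) = 0 := by
    rw [h0, psi]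
    apply Finset.sum_eq_zero
    intro v _
    have : degN (⊥ : SimpleGraph V) v = 0 := by
      rw [degN]
      convert Set.ncard_empty V
      ext w; simp

    rw [psiF, this]
    ring
  -- psi (H t) ≥ 2 t by induction
  have hlow : ∀ t ≤ T, (2 * t : ℤ) ≤ psi β (H t) := by
    intro t
    induction t with
    | zero => intro _; simp [hpsi0]
    | succ k ih =>
      intro hk
      have h1 := ih (Nat.le_of_succ_le hk)
      have h2 := key k (Nat.lt_of_succ_le hk)
      push_cast
      push_cast at h1
      linarith
  -- psi ≤ 2 n β²
  have hup : psi β (H T) ≤ 2 * n * β ^ 2 := by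
    rw [psi]
    calc ∑ v : V, psiF β (H T) v ≤ ∑ _v : V, (2 * (β : ℤ) ^ 2) := by
          apply Finset.sum_le_sum
          intro v _
          rw [psiF]
          have hd : (0 : ℤ) ≤ (degN (H T) v : ℤ) := Int.natCast_nonneg _
          have hβ' : (0 : ℤ) ≤ (β : ℤ) := Int.natCast_nonneg _
          nlinarith [sq_nonneg ((β : ℤ) - (degN (H T) v : ℤ)), sq_nonneg ((degN (H T) v : ℤ))]
      _ = 2 * n * β ^ 2 := by
          rw [Finset.sum_const, Finset.card_univ, hcard]
          push_cast
          ring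
  have := hlow T le_rfl
  have hfin : (2 * T : ℤ) ≤ 2 * n * β ^ 2 := le_trans this hup
  have : (T : ℤ) ≤ n * β ^ 2 := by linarith
  exact_mod_cast this
end

section
/- Let n ≥ 2 be an integer and let T be a finite rooted tree with at most n vertices. Let ℓ and ℓ' be positive integers with 2^{⌊ℓ/ℓ'⌋} > n. Suppose that every internal vertex of T has at least one descendant whose distance from the root exceeds ℓ (i.e., a non-internal descendant). Then T contains an internal path of length at least ℓ'. -/
/-- The depth (distance to the root) of a vertex `v` in a rooted tree described by a
parent function: the least `k` with `parent^[k] v = root`. -/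
noncomputable def treeDepth {V : Type*} (parent : V → V) (root : V) (v : V) : ℕ :=
  sInf {k | parent^[k] v = root}

section Aux
variable {V : Type*} {parent : V → V} {root : V}

def iterFinset {V : Type*} [DecidableEq V] (F : V → Finset V) (root : V) : ℕ → Finset V
  | 0 => {root}
  | j + 1 => (iterFinset F root j).biUnion F

lemma iterFinset_zero {V : Type*} [DecidableEq V] (F : V → Finset V) (root : V) :
    iterFinset F root 0 = {root} := rfl

lemma iterFinset_succ {V : Type*} [DecidableEq V] (F : V → Finset V) (root : V) (j : ℕ) :
    iterFinset F root (j + 1) = (iterFinset F root j).biUnion F := rfl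

lemma iterate_depth (hreach : ∀ v : V, ∃ k : ℕ, parent^[k] v = root) (v : V) :
    parent^[treeDepth parent root v] v = root :=
  Nat.sInf_mem (hreach v)

lemma depth_root : treeDepth parent root root = 0 := by
  have h0 : (0 : ℕ) ∈ {k | parent^[k] root = root} := by simp
  exact Nat.sInf_eq_zero.mpr (Or.inl h0)

lemma depth_parent (hreach : ∀ v : V, ∃ k : ℕ, parent^[k] v = root) {v : V} (hv : v ≠ root) :
    treeDepth parent root v = treeDepth parent root (parent v) + 1 := by
  have h1 : parent^[treeDepth parent root v] v = root := iterate_depth hreach v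
  have h0 : treeDepth parent root v ≠ 0 := by
    intro h; rw [h] at h1; exact hv h1
  obtain ⟨m, hm⟩ := Nat.exists_eq_succ_of_ne_zero h0
  have h2 : parent^[m] (parent v) = root := by
    rw [← Function.iterate_succ_apply]; rw [hm] at h1; exact h1
  have le1 : treeDepth parent root (parent v) ≤ m := Nat.sInf_le h2
  have h3 : parent^[treeDepth parent root (parent v) + 1] v = root := by
    rw [Function.iterate_succ_apply]; exact iterate_depth hreach (parent v)
  have le2 : treeDepth parent root v ≤ treeDepth parent root (parent v) + 1 := Nat.sInf_le h3
  omega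

lemma depth_ancestor (hroot : parent root = root)
    (hreach : ∀ v : V, ∃ k : ℕ, parent^[k] v = root) :
    ∀ (k : ℕ) (w v : V), parent^[k] w = v → v ≠ root →
      treeDepth parent root w = treeDepth parent root v + k := by
  intro k
  induction k with
  | zero => intro w v h _; simp only [Function.iterate_zero, id_eq] at h; simp [h]
  | succ k ih =>
    intro w v h hv
    have hw : w ≠ root := by
      intro hw; subst hw
      have hfix := Function.iterate_fixed hroot (k+1)
      rw [hfix] at h; exact hv h.symm
    have h' : parent^[k] (parent w) = v := by
      rwa [← Function.iterate_succ_apply]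
    have := ih (parent w) v h' hv
    rw [depth_parent hreach hw, this]; omega

lemma exists_child (hroot : parent root = root)
    (hreach : ∀ v : V, ∃ k : ℕ, parent^[k] v = root) {ℓ : ℕ} {v : V}
    (hv : treeDepth parent root v ≤ ℓ)
    (hw : ∃ (w : V) (k : ℕ), parent^[k] w = v ∧ ℓ < treeDepth parent root w) :
    ∃ c, c ≠ root ∧ parent c = v ∧ treeDepth parent root c = treeDepth parent root v + 1 := by
  classical
  obtain ⟨w, k, hk, hdw⟩ := hw
  have hex : ∃ j : ℕ, parent^[j] w = v := ⟨k, hk⟩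
  set j := Nat.find hex with hjdef
  have hj : parent^[j] w = v := Nat.find_spec hex
  have hj0 : j ≠ 0 := by
    intro h
    rw [h] at hj; simp only [Function.iterate_zero, id_eq] at hj
    rw [hj] at hdw; omega
  obtain ⟨j', hj'⟩ := Nat.exists_eq_succ_of_ne_zero hj0
  have hpc : parent (parent^[j'] w) = v := by
    rw [← Function.iterate_succ_apply' parent j' w]; exact hj' ▸ hj
  have hcr : parent^[j'] w ≠ root := by
    intro hc
    have hv0 : v = root := by rw [← hpc, hc, hroot]
    have h2 : parent^[j'] w = v := by rw [hc, hv0]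
    have := @Nat.find_le j' (fun j => parent^[j] w = v) _ hex h2
    omega
  exact ⟨parent^[j'] w, hcr, hpc, by rw [depth_parent hreach hcr, hpc]⟩

end Aux

/-- If `T` is a rooted tree with at most `n` vertices, `2^⌊ℓ/ℓ'⌋ > n`, and every internal
vertex (distance at most `ℓ` from the root) has a descendant at distance more than `ℓ`
from the root, then `T` contains an internal path of length at least `ℓ'`: a sequence of
internal vertices each of which is the parent of the next and each of which has exactly
one child. -/
theorem exists_long_internal_path
    {V : Type*} [Fintype V] (n : ℕ) (hn : 2 ≤ n) (hcard : Fintype.card V ≤ n)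
    (root : V) (parent : V → V) (hroot : parent root = root)
    (hreach : ∀ v : V, ∃ k : ℕ, parent^[k] v = root)
    (ℓ ℓ' : ℕ) (hℓ : 0 < ℓ) (hℓ' : 0 < ℓ')
    (hpow : n < 2 ^ (ℓ / ℓ'))
    (hdesc : ∀ v : V, treeDepth parent root v ≤ ℓ →
      ∃ (w : V) (k : ℕ), parent^[k] w = v ∧ ℓ < treeDepth parent root w) :
    ∃ (k : ℕ) (u : ℕ → V), ℓ' ≤ k ∧
      (∀ i < k, treeDepth parent root (u i) ≤ ℓ) ∧
      (∀ i, i + 1 < k → u (i + 1) ≠ root ∧ parent (u (i + 1)) = u i) ∧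
      (∀ i < k, {w : V | w ≠ root ∧ parent w = u i}.ncard = 1) := by
  classical
  by_contra H
  have hchild : ∀ v : V, treeDepth parent root v ≤ ℓ →
      ∃ c, c ≠ root ∧ parent c = v ∧ treeDepth parent root c = treeDepth parent root v + 1 :=
    fun v hv => exists_child hroot hreach hv (hdesc v hv)
  have factC : ∀ (z x y : V) (a b : ℕ), parent^[a] z = x → parent^[b] z = y →
      (∃ s, parent^[s] x = y) ∨ (∃ s, parent^[s] y = x) := by
    intro z x y a b ha hb
    rcases le_total a b with h | h
    · exact Or.inl ⟨b - a, by
        rw [← ha, ← Function.iterate_add_apply, Nat.sub_add_cancel h]; exact hb⟩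
    · exact Or.inr ⟨a - b, by
        rw [← hb, ← Function.iterate_add_apply, Nat.sub_add_cancel h]; exact ha⟩
  -- Lemma A : from any vertex at depth ≤ ℓ - ℓ', there is a branching descendant close by
  have hbranch : ∀ v : V, treeDepth parent root v + ℓ' ≤ ℓ →
      ∃ (bb c₁ c₂ : V) (t₁ t₂ : ℕ), parent^[t₁] c₁ = v ∧ parent^[t₂] c₂ = v ∧
        c₁ ≠ c₂ ∧ c₁ ≠ root ∧ c₂ ≠ root ∧ parent c₁ = bb ∧ parent c₂ = bb ∧
        treeDepth parent root c₁ ≤ treeDepth parent root v + ℓ' ∧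
        treeDepth parent root c₂ ≤ treeDepth parent root v + ℓ' := by
    intro v hv
    by_contra hno
    set ch : V → V := fun x =>
      if h : ∃ c, c ≠ root ∧ parent c = x ∧ treeDepth parent root c = treeDepth parent root x + 1
      then h.choose else x with hch
    have chspec : ∀ x : V, treeDepth parent root x ≤ ℓ →
        ch x ≠ root ∧ parent (ch x) = x ∧
        treeDepth parent root (ch x) = treeDepth parent root x + 1 := by
      intro x hx
      have hex := hchild x hx
      simp only [hch, dif_pos hex]
      exact hex.choose_spec
    set u : ℕ → V := fun i => ch^[i] v with hu
    have key1 : ∀ i, i ≤ ℓ' →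
        parent^[i] (u i) = v ∧ treeDepth parent root (u i) = treeDepth parent root v + i := by
      intro i
      induction i with
      | zero => intro _; exact ⟨rfl, by simp [hu]⟩
      | succ i ih =>
        intro hi
        obtain ⟨h1, h2⟩ := ih (by omega)
        have hdu : treeDepth parent root (u i) ≤ ℓ := by omega
        have hspec := chspec (u i) hdu
        have husucc : u (i+1) = ch (u i) := Function.iterate_succ_apply' ch i v
        refine ⟨?_, ?_⟩
        · rw [Function.iterate_succ_apply, husucc, hspec.2.1]; exact h1
        · rw [husucc, hspec.2.2, h2]; omega
    have hone : ∀ i, i < ℓ' → {w : V | w ≠ root ∧ parent w = u i}.ncard = 1 := by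
      intro i hi
      obtain ⟨h1, h2⟩ := key1 i (le_of_lt hi)
      have hdu : treeDepth parent root (u i) ≤ ℓ := by omega
      have hfin : {w : V | w ≠ root ∧ parent w = u i}.Finite := Set.toFinite _
      have hne : {w : V | w ≠ root ∧ parent w = u i}.Nonempty := by
        obtain ⟨c, hc1, hc2, _⟩ := hchild (u i) hdu
        exact ⟨c, hc1, hc2⟩
      have hpos : 0 < {w : V | w ≠ root ∧ parent w = u i}.ncard :=
        (Set.ncard_pos hfin).mpr hne
      by_contra hne1
      have h2lt : 1 < {w : V | w ≠ root ∧ parent w = u i}.ncard := by omega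
      rw [Set.one_lt_ncard_iff hfin] at h2lt
      obtain ⟨a, b, ha, hb, hab⟩ := h2lt
      refine hno ⟨u i, a, b, i + 1, i + 1, ?_, ?_, hab, ha.1, hb.1, ha.2, hb.2, ?_, ?_⟩
      · rw [Function.iterate_succ_apply, ha.2]; exact h1
      · rw [Function.iterate_succ_apply, hb.2]; exact h1
      · rw [depth_parent hreach ha.1, ha.2]; omega
      · rw [depth_parent hreach hb.1, hb.2]; omega
    refine H ⟨ℓ', u, le_rfl, ?_, ?_, hone⟩
    · intro i hi
      obtain ⟨_, h2⟩ := key1 i (le_of_lt hi)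
      omega
    · intro i hi
      obtain ⟨h1, h2⟩ := key1 i (by omega)
      have hdu : treeDepth parent root (u i) ≤ ℓ := by omega
      have hspec := chspec (u i) hdu
      have husucc : u (i+1) = ch (u i) := Function.iterate_succ_apply' ch i v
      rw [husucc]
      exact ⟨hspec.1, hspec.2.1⟩
  -- Skolemize
  choose! bb c₁ c₂ t₁ t₂ ht₁ ht₂ hc12 hc₁r hc₂r hp₁ hp₂ hd₁ hd₂ using hbranch
  set F : V → Finset V := fun v => {c₁ v, c₂ v} with hF
  have hm1 : ℓ / ℓ' ≠ 0 := by
    intro h; rw [h, pow_zero] at hpow; omega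
  have hmℓ : (ℓ / ℓ') * ℓ' ≤ ℓ := Nat.div_mul_le_self ℓ ℓ'
  have inv : ∀ j, j ≤ ℓ / ℓ' →
      (∀ v ∈ iterFinset F root j, treeDepth parent root v ≤ j * ℓ') ∧
      (∀ x ∈ iterFinset F root j, ∀ y ∈ iterFinset F root j, x ≠ y →
        ∀ k, parent^[k] x ≠ y) ∧
      (iterFinset F root j).card = 2 ^ j := by
    intro j
    induction j with
    | zero =>
      intro _
      refine ⟨?_, ?_, ?_⟩
      · intro v hv
        rw [iterFinset_zero, Finset.mem_singleton] at hv
        simp [hv, depth_root]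
      · intro x hx y hy hxy
        rw [iterFinset_zero, Finset.mem_singleton] at hx hy
        exact absurd (hx.trans hy.symm) hxy
      · rw [iterFinset_zero]; simp
    | succ j ih =>
      intro hj
      obtain ⟨ihd, ihinc, ihcard⟩ := ih (by omega)
      have hmul : (j+1) * ℓ' ≤ (ℓ / ℓ') * ℓ' := Nat.mul_le_mul_right _ hj
      have hsm : (j+1) * ℓ' = j * ℓ' + ℓ' := Nat.succ_mul j ℓ'
      have hcond : ∀ v ∈ iterFinset F root j, treeDepth parent root v + ℓ' ≤ ℓ := by
        intro v hv
        have := ihd v hv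
        omega
      have hFmem : ∀ v, treeDepth parent root v + ℓ' ≤ ℓ → ∀ c ∈ F v,
          (∃ t, parent^[t] c = v) ∧ c ≠ root ∧ parent c = bb v ∧
          treeDepth parent root c ≤ treeDepth parent root v + ℓ' := by
        intro v hv c hc
        have hcv : c = c₁ v ∨ c = c₂ v := by simpa [hF] using hc
        rcases hcv with rfl | rfl
        · exact ⟨⟨t₁ v, ht₁ v hv⟩, hc₁r v hv, hp₁ v hv, hd₁ v hv⟩
        · exact ⟨⟨t₂ v, ht₂ v hv⟩, hc₂r v hv, hp₂ v hv, hd₂ v hv⟩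
      refine ⟨?_, ?_, ?_⟩
      · intro c hc
        rw [iterFinset_succ, Finset.mem_biUnion] at hc
        obtain ⟨v, hv, hcv⟩ := hc
        have := (hFmem v (hcond v hv) c hcv).2.2.2
        have := ihd v hv
        omega
      · intro x' hx' y' hy' hne k hk
        rw [iterFinset_succ, Finset.mem_biUnion] at hx' hy'
        obtain ⟨x, hx, hx'F⟩ := hx'
        obtain ⟨y, hy, hy'F⟩ := hy'
        obtain ⟨⟨tx, htx⟩, hx'r, hx'p, _⟩ := hFmem x (hcond x hx) x' hx'F
        obtain ⟨⟨ty, hty⟩, hy'r, hy'p, _⟩ := hFmem y (hcond y hy) y' hy'F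
        by_cases hxy : x = y
        · subst hxy
          have hdx : treeDepth parent root x' = treeDepth parent root (bb x) + 1 := by
            rw [depth_parent hreach hx'r, hx'p]
          have hdy : treeDepth parent root y' = treeDepth parent root (bb x) + 1 := by
            rw [depth_parent hreach hy'r, hy'p]
          have hk0 : k ≠ 0 := by
            intro h; rw [h] at hk
            simp only [Function.iterate_zero, id_eq] at hk
            exact hne hk
          have := depth_ancestor hroot hreach k x' y' hk hy'r
          omega
        · have h1 : parent^[ty + k] x' = y := by
            rw [Function.iterate_add_apply, hk]; exact hty
          rcases factC x' x y tx (ty + k) htx h1 with ⟨s, hs⟩ | ⟨s, hs⟩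
          · exact ihinc x hx y hy hxy s hs
          · exact ihinc y hy x hx (Ne.symm hxy) s hs
      · have hdisj : ∀ x ∈ iterFinset F root j, ∀ y ∈ iterFinset F root j,
            x ≠ y → Disjoint (F x) (F y) := by
          intro x hx y hy hxy
          rw [Finset.disjoint_left]
          intro c hcx hcy
          obtain ⟨⟨tx, htx⟩, _, _, _⟩ := hFmem x (hcond x hx) c hcx
          obtain ⟨⟨ty, hty⟩, _, _, _⟩ := hFmem y (hcond y hy) c hcy
          rcases factC c x y tx ty htx hty with ⟨s, hs⟩ | ⟨s, hs⟩
          · exact ihinc x hx y hy hxy s hs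
          · exact ihinc y hy x hx (Ne.symm hxy) s hs
        rw [iterFinset_succ, Finset.card_biUnion hdisj]
        have hF2 : ∀ v ∈ iterFinset F root j, (F v).card = 2 := by
          intro v hv
          rw [hF]
          exact Finset.card_pair (hc12 v (hcond v hv))
        rw [Finset.sum_congr rfl hF2, Finset.sum_const, ihcard, smul_eq_mul, pow_succ]
  obtain ⟨_, _, hcardm⟩ := inv (ℓ / ℓ') le_rfl
  have h1 : (iterFinset F root (ℓ / ℓ')).card ≤ Fintype.card V := Finset.card_le_univ _
  omega
end

section
/- Let ε be a real with 0 < ε < 1 and let a₁, b₁ be nonnegative reals with a₁ + b₁ = 1. Then for every integer i ≥ 2 it holds that a'ᵢ ≥ 0 and b'ᵢ ≥ 0, and for every integer i ≥ 3 it holds that ε·a'ᵢ ≤ b'ᵢ. -/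
/-- The explicit sequence `a'ᵢ` from Claim 5.10. -/
noncomputable def aSeq (ε a₁ b₁ : ℝ) (i : ℕ) : ℝ :=
  ((1 - ε) ^ 2 * (a₁ + b₁) - (ε - 1) ^ i * (a₁ - (1 - ε) * b₁)) / ((2 - ε) * (1 - ε))

/-- The explicit sequence `b'ᵢ` from Claim 5.10. -/
noncomputable def bSeq (ε a₁ b₁ : ℝ) (i : ℕ) : ℝ :=
  ((1 - ε) * (a₁ + b₁) + (ε - 1) ^ i * (a₁ - (1 - ε) * b₁)) / ((2 - ε) * (1 - ε))

/-- For all `i ≥ 2` the explicit sequences `a'ᵢ`, `b'ᵢ` are nonnegative, and for all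
`i ≥ 3` it holds that `ε·a'ᵢ ≤ b'ᵢ`. -/
theorem aSeq_bSeq_nonneg_and_comparison
    (ε a₁ b₁ : ℝ) (hε0 : 0 < ε) (hε1 : ε < 1)
    (ha : 0 ≤ a₁) (hb : 0 ≤ b₁) (hab : a₁ + b₁ = 1) :
    (∀ i : ℕ, 2 ≤ i → 0 ≤ aSeq ε a₁ b₁ i ∧ 0 ≤ bSeq ε a₁ b₁ i) ∧
    (∀ i : ℕ, 3 ≤ i → ε * aSeq ε a₁ b₁ i ≤ bSeq ε a₁ b₁ i) := by
  have hd : 0 < (2 - ε) * (1 - ε) := by nlinarith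
  set c : ℝ := a₁ - (1 - ε) * b₁ with hc
  have hcle : |c| ≤ 1 := by
    rw [abs_le]; constructor <;> nlinarith
  have habs1 : |ε - 1| = 1 - ε := by rw [abs_of_nonpos (by linarith)]; ring
  have habs : ∀ i : ℕ, |(ε - 1) ^ i * c| ≤ (1 - ε) ^ i := by
    intro i
    calc |(ε - 1) ^ i * c| = (1 - ε) ^ i * |c| := by rw [abs_mul, abs_pow, habs1]
      _ ≤ (1 - ε) ^ i := mul_le_of_le_one_right (pow_nonneg (by linarith) i) hcle
  have hpow : ∀ i j : ℕ, j ≤ i → (1 - ε) ^ i ≤ (1 - ε) ^ j := fun i j h =>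
    pow_le_pow_of_le_one (by linarith) (by linarith) h
  constructor
  · intro i hi
    have h1 := habs i
    have h2 := hpow i 2 hi
    have h3 := hpow i 1 (by omega)
    rw [pow_one] at h3
    rw [abs_le] at h1
    rw [aSeq, bSeq, ← hc, hab]
    constructor
    · apply div_nonneg _ hd.le
      nlinarith [h1.2]
    · apply div_nonneg _ hd.le
      nlinarith [h1.1]
  · intro i hi
    have h1 := habs i
    have h2 := hpow i 3 hi
    rw [abs_le] at h1
    have ht : -(1 - ε) ^ 3 ≤ (ε - 1) ^ i * c := by linarith [h1.1]
    rw [aSeq, bSeq, ← hc, hab, ← mul_div_assoc, div_le_div_iff₀ hd hd]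
    have key : 0 ≤ (1 + ε) * ((ε - 1) ^ i * c) + (1 - ε) * (1 - ε + ε ^ 2) := by
      nlinarith [mul_nonneg (by linarith : (0:ℝ) ≤ 1 + ε)
        (by linarith : (0:ℝ) ≤ (ε - 1) ^ i * c + (1 - ε) ^ 3), sq_nonneg ε, mul_pos hε0 hε0]
    nlinarith [mul_nonneg hd.le key]
end

section
/- Let N, D, δ be positive integers with δ ≥ 3. Let X and Y be disjoint finite sets with |X| = |Y| = N, and let H ⊆ X × Y be a bipartite graph such that every vertex of X ∪ Y has degree at least δ and at most D in H. Let σ : X → Y be a bijection such that (x, σ(x)) ∉ H for every x ∈ X. Let v ∈ X and u ∈ Y be such that (v,u) ∈ H and u ≠ σ(v). Then the number of pairs (w,z) ∈ H with w ∈ X and z ∈ Y satisfying all of the following conditions is at least (δ−3)·(N−D−1) − D²: w ≠ v, z ≠ u, σ(w) ≠ u, z ≠ σ(v), (w,u) ∉ H, and (v,z) ∉ H. (Equivalently, the four vertices u, v, w, z are distinct, no two of them are paired under σ, and the only edges of H among {u,v,w,z} are (v,u) and (w,z).) -/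
/-- The counting core of the swapping/coupling argument (Case 2 of Claim 4.5): in a
bipartite graph `H ⊆ X × Y` with all degrees in `[δ, D]`, given a bijection `σ : X → Y`
avoiding `H` and an edge `(v, u) ∈ H` with `u ≠ σ(v)`, the number of edges `(w, z) ∈ H`
such that `u, v, w, z` are four distinct vertices, no two of them are paired under `σ`,
and the only edges of `H` among them are `(v, u)` and `(w, z)`, is at least
`(δ−3)·(N−D−1) − D²`. -/
theorem swap_pairs_count_lower_bound
    {X Y : Type*} [Fintype X] [Fintype Y]
    (N D δ : ℕ) (hN : 0 < N) (hD : 0 < D) (hδ : 3 ≤ δ)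
    (hX : Fintype.card X = N) (hY : Fintype.card Y = N)
    (H : Set (X × Y))
    (hdegX : ∀ x : X, δ ≤ {e ∈ H | e.1 = x}.ncard ∧ {e ∈ H | e.1 = x}.ncard ≤ D)
    (hdegY : ∀ y : Y, δ ≤ {e ∈ H | e.2 = y}.ncard ∧ {e ∈ H | e.2 = y}.ncard ≤ D)
    (σ : X ≃ Y) (hσ : ∀ x : X, (x, σ x) ∉ H)
    (v : X) (u : Y) (hvu : (v, u) ∈ H) (huσ : u ≠ σ v) :
    ((δ : ℤ) - 3) * ((N : ℤ) - D - 1) - (D : ℤ) ^ 2 ≤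
      ({e ∈ H | e.1 ≠ v ∧ e.2 ≠ u ∧ σ e.1 ≠ u ∧ e.2 ≠ σ v ∧
        (e.1, u) ∉ H ∧ (v, e.2) ∉ H}.ncard : ℤ) := by
  classical
  -- conversion of ncard of a separated set to a filter card
  have hconv : ∀ P : X × Y → Prop, {e ∈ H | P e}.ncard
      = (Finset.univ.filter fun e : X × Y => e ∈ H ∧ P e).card := by
    intro P
    rw [← Set.ncard_coe_finset]
    congr 1
    ext e
    simp [Set.mem_sep_iff]
  -- fiber cards in each coordinate
  have hfibX : ∀ (P : X × Y → Prop) (w : X),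
      (Finset.univ.filter fun e : X × Y => P e ∧ e.1 = w).card
        = (Finset.univ.filter fun z : Y => P (w, z)).card := by
    intro P w
    apply Finset.card_bij (fun e _ => e.2)
    · rintro ⟨a, b⟩ he
      simp only [Finset.mem_filter, Finset.mem_univ, true_and] at he ⊢
      obtain ⟨hP, rfl⟩ := he
      exact hP
    · rintro ⟨a₁, b₁⟩ h₁ ⟨a₂, b₂⟩ h₂ h
      simp only [Finset.mem_filter, Finset.mem_univ, true_and] at h₁ h₂
      simp only at h
      simp [h₁.2, h₂.2, h]
    · intro z hz
      simp only [Finset.mem_filter, Finset.mem_univ, true_and] at hz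
      exact ⟨(w, z), by simp [hz], rfl⟩
  have hfibY : ∀ (P : X × Y → Prop) (z : Y),
      (Finset.univ.filter fun e : X × Y => P e ∧ e.2 = z).card
        = (Finset.univ.filter fun w : X => P (w, z)).card := by
    intro P z
    apply Finset.card_bij (fun e _ => e.1)
    · rintro ⟨a, b⟩ he
      simp only [Finset.mem_filter, Finset.mem_univ, true_and] at he ⊢
      obtain ⟨hP, rfl⟩ := he
      exact hP
    · rintro ⟨a₁, b₁⟩ h₁ ⟨a₂, b₂⟩ h₂ h
      simp only [Finset.mem_filter, Finset.mem_univ, true_and] at h₁ h₂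
      simp only at h
      simp [h₁.2, h₂.2, h]
    · intro w hw
      simp only [Finset.mem_filter, Finset.mem_univ, true_and] at hw
      exact ⟨(w, z), by simp [hw], rfl⟩
  -- degree bounds in coordinate form
  have degX' : ∀ w : X, δ ≤ (Finset.univ.filter fun z : Y => (w, z) ∈ H).card ∧
      (Finset.univ.filter fun z : Y => (w, z) ∈ H).card ≤ D := by
    intro w
    have h := hdegX w
    rwa [hconv (fun e => e.1 = w), hfibX (· ∈ H) w] at h
  have degY' : ∀ z : Y, δ ≤ (Finset.univ.filter fun w : X => (w, z) ∈ H).card ∧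
      (Finset.univ.filter fun w : X => (w, z) ∈ H).card ≤ D := by
    intro z
    have h := hdegY z
    rwa [hconv (fun e => e.2 = z), hfibY (· ∈ H) z] at h
  -- the target finset
  set T : Finset (X × Y) := Finset.univ.filter fun e : X × Y =>
    e ∈ H ∧ (e.1 ≠ v ∧ e.2 ≠ u ∧ σ e.1 ≠ u ∧ e.2 ≠ σ v ∧ (e.1, u) ∉ H ∧ (v, e.2) ∉ H)
    with hT
  have hgoal : ({e ∈ H | e.1 ≠ v ∧ e.2 ≠ u ∧ σ e.1 ≠ u ∧ e.2 ≠ σ v ∧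
      (e.1, u) ∉ H ∧ (v, e.2) ∉ H} : Set (X × Y)).ncard = T.card := by
    rw [← Set.ncard_coe_finset]
    congr 1
    ext e
    simp only [hT, Finset.coe_filter, Finset.mem_univ, true_and, Set.mem_setOf_eq,
      Set.mem_sep_iff]
  rw [hgoal]
  -- good first coordinates
  set W : Finset X := Finset.univ.filter fun w : X => σ w ≠ u ∧ (w, u) ∉ H with hW
  have hNu : (Finset.univ.filter fun w : X => (w, u) ∈ H).card ≤ D := (degY' u).2
  have hWcard : (N : ℤ) - D - 1 ≤ (W.card : ℤ) := by
    have hsplit := Finset.card_filter_add_card_filter_not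
      (s := (Finset.univ : Finset X)) (p := fun w : X => σ w ≠ u ∧ (w, u) ∉ H)
    have hsub : (Finset.univ.filter fun w : X => ¬(σ w ≠ u ∧ (w, u) ∉ H)) ⊆
        insert (σ.symm u) (Finset.univ.filter fun w : X => (w, u) ∈ H) := by
      intro w hw
      simp only [Finset.mem_filter, Finset.mem_univ, true_and, not_and_or, not_not] at hw
      rcases hw with h | h
      · have hw' : w = σ.symm u := by rw [Equiv.eq_symm_apply]; exact h
        simp [hw']
      · exact Finset.mem_insert_of_mem (by simp [h])
    have hle : (Finset.univ.filter fun w : X => ¬(σ w ≠ u ∧ (w, u) ∉ H)).card ≤ D + 1 := by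
      calc (Finset.univ.filter fun w : X => ¬(σ w ≠ u ∧ (w, u) ∉ H)).card
          ≤ (insert (σ.symm u) (Finset.univ.filter fun w : X => (w, u) ∈ H)).card :=
            Finset.card_le_card hsub
        _ ≤ (Finset.univ.filter fun w : X => (w, u) ∈ H).card + 1 :=
            Finset.card_insert_le _ _
        _ ≤ D + 1 := by omega
    have hcardX : (Finset.univ : Finset X).card = N := by simpa using hX
    rw [hcardX] at hsplit
    have : N ≤ W.card + (D + 1) := by rw [hW]; omega
    push_cast
    omega
  -- for each w, the common-neighborhood with v
  have claim2 : ∀ w : X, (δ : ℤ) - 1 -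
      ((Finset.univ.filter fun z : Y => (w, z) ∈ H ∧ (v, z) ∈ H).card : ℤ)
      ≤ ((Finset.univ.filter fun z : Y =>
            (w, z) ∈ H ∧ z ≠ σ v ∧ (v, z) ∉ H).card : ℤ) := by
    intro w
    have hsub : (Finset.univ.filter fun z : Y => (w, z) ∈ H) ⊆
        (Finset.univ.filter fun z : Y => (w, z) ∈ H ∧ z ≠ σ v ∧ (v, z) ∉ H) ∪
          insert (σ v) (Finset.univ.filter fun z : Y => (w, z) ∈ H ∧ (v, z) ∈ H) := by
      intro z hz
      simp only [Finset.mem_filter, Finset.mem_univ, true_and] at hz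
      by_cases h1 : z = σ v
      · exact Finset.mem_union_right _ (by simp [h1])
      by_cases h2 : (v, z) ∈ H
      · exact Finset.mem_union_right _ (Finset.mem_insert_of_mem (by simp [hz, h2]))
      · exact Finset.mem_union_left _ (by simp [hz, h1, h2])
    have h1 := Finset.card_le_card hsub
    have h2 := Finset.card_union_le
      (Finset.univ.filter fun z : Y => (w, z) ∈ H ∧ z ≠ σ v ∧ (v, z) ∉ H)
      (insert (σ v) (Finset.univ.filter fun z : Y => (w, z) ∈ H ∧ (v, z) ∈ H))
    have h3 := Finset.card_insert_le (σ v)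
      (Finset.univ.filter fun z : Y => (w, z) ∈ H ∧ (v, z) ∈ H)
    have h4 := (degX' w).1
    push_cast
    omega
  -- fiber of T over a good w contains the good z's
  have claim1 : ∀ w ∈ W,
      (Finset.univ.filter fun z : Y => (w, z) ∈ H ∧ z ≠ σ v ∧ (v, z) ∉ H).card
        ≤ (T.filter fun e => e.1 = w).card := by
    intro w hw
    simp only [hW, Finset.mem_filter, Finset.mem_univ, true_and] at hw
    apply Finset.card_le_card_of_injOn (fun z => (w, z))
    · intro z hz
      simp only [Finset.mem_coe, Finset.mem_filter, Finset.mem_univ, true_and] at hz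
      obtain ⟨hz1, hz2, hz3⟩ := hz
      have hwv : w ≠ v := by
        rintro rfl; exact hw.2 hvu
      have hzu : z ≠ u := by
        rintro rfl; exact hw.2 hz1
      simp only [hT, Finset.mem_coe, Finset.mem_filter, Finset.mem_univ, true_and]
      exact ⟨⟨hz1, hwv, hzu, hw.1, hz2, hw.2, hz3⟩, trivial⟩
    · intro z₁ _ z₂ _ h
      simpa using congrArg Prod.snd h
  -- double counting the common neighborhoods
  set S : Finset (X × Y) := Finset.univ.filter fun e : X × Y =>
    e ∈ H ∧ (v, e.2) ∈ H with hS
  have hSsum : S.card = ∑ w ∈ Finset.univ,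
      (Finset.univ.filter fun z : Y => (w, z) ∈ H ∧ (v, z) ∈ H).card := by
    rw [Finset.card_eq_sum_card_fiberwise (f := Prod.fst) (t := Finset.univ)
      (fun e _ => Finset.mem_univ e.1)]
    refine Finset.sum_congr rfl fun w _ => ?_
    rw [hS, Finset.filter_filter]
    convert hfibX (fun e => e ∈ H ∧ (v, e.2) ∈ H) w using 2 <;> (ext a; simp)
  have hSbound : S.card ≤ D * D := by
    rw [Finset.card_eq_sum_card_fiberwise (f := Prod.snd) (t := Finset.univ)
      (fun e _ => Finset.mem_univ e.2)]
    have hterm : ∀ z : Y, (S.filter fun e => e.2 = z).card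
        ≤ if (v, z) ∈ H then D else 0 := by
      intro z
      have heq : (S.filter fun e => e.2 = z).card
          = (Finset.univ.filter fun w : X => (w, z) ∈ H ∧ (v, z) ∈ H).card := by
        rw [hS, Finset.filter_filter]
        convert hfibY (fun e => e ∈ H ∧ (v, e.2) ∈ H) z using 2 <;> (ext a; simp)
      rw [heq]
      by_cases h : (v, z) ∈ H
      · rw [if_pos h]
        refine le_trans (Finset.card_le_card ?_) (degY' z).2
        intro a ha
        simp only [Finset.mem_filter] at ha ⊢
        exact ⟨ha.1, ha.2.1⟩
      · rw [if_neg h]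
        simp [h]
    calc ∑ z ∈ Finset.univ, (S.filter fun e => e.2 = z).card
        ≤ ∑ z ∈ Finset.univ, if (v, z) ∈ H then D else 0 :=
          Finset.sum_le_sum fun z _ => hterm z
      _ = ∑ z ∈ Finset.univ.filter fun z : Y => (v, z) ∈ H, D := by
          rw [Finset.sum_filter]
      _ = (Finset.univ.filter fun z : Y => (v, z) ∈ H).card * D := by
          rw [Finset.sum_const, smul_eq_mul]
      _ ≤ D * D := Nat.mul_le_mul_right D (degX' v).2
  -- assemble
  have hTsum : T.card = ∑ w ∈ Finset.univ, (T.filter fun e => e.1 = w).card :=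
    Finset.card_eq_sum_card_fiberwise (fun e _ => Finset.mem_univ e.1)
  have step1 : ∑ w ∈ W, (T.filter fun e => e.1 = w).card ≤ T.card := by
    rw [hTsum]
    exact Finset.sum_le_sum_of_subset (Finset.subset_univ W)
  have step2 : ∑ w ∈ W,
      (Finset.univ.filter fun z : Y => (w, z) ∈ H ∧ z ≠ σ v ∧ (v, z) ∉ H).card
      ≤ ∑ w ∈ W, (T.filter fun e => e.1 = w).card :=
    Finset.sum_le_sum claim1
  have step3 : ((δ : ℤ) - 1) * W.card - (S.card : ℤ) ≤
      (∑ w ∈ W, ((Finset.univ.filter fun z : Y =>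
        (w, z) ∈ H ∧ z ≠ σ v ∧ (v, z) ∉ H).card : ℤ)) := by
    have hCsum : ∑ w ∈ W,
        ((Finset.univ.filter fun z : Y => (w, z) ∈ H ∧ (v, z) ∈ H).card : ℤ)
        ≤ (S.card : ℤ) := by
      have : ∑ w ∈ W,
          (Finset.univ.filter fun z : Y => (w, z) ∈ H ∧ (v, z) ∈ H).card ≤ S.card := by
        rw [hSsum]
        exact Finset.sum_le_sum_of_subset (Finset.subset_univ W)
      exact_mod_cast this
    calc ((δ : ℤ) - 1) * W.card - (S.card : ℤ)
        ≤ ((δ : ℤ) - 1) * W.card - ∑ w ∈ W,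
            ((Finset.univ.filter fun z : Y => (w, z) ∈ H ∧ (v, z) ∈ H).card : ℤ) := by
          linarith
      _ = ∑ w ∈ W, ((δ : ℤ) - 1 -
            ((Finset.univ.filter fun z : Y => (w, z) ∈ H ∧ (v, z) ∈ H).card : ℤ)) := by
          rw [Finset.sum_sub_distrib, Finset.sum_const, nsmul_eq_mul, mul_comm]
      _ ≤ _ := Finset.sum_le_sum fun w _ => claim2 w
  have hfinal : ((δ : ℤ) - 1) * W.card - (S.card : ℤ) ≤ (T.card : ℤ) := by
    calc ((δ : ℤ) - 1) * W.card - (S.card : ℤ)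
        ≤ ∑ w ∈ W, ((Finset.univ.filter fun z : Y =>
            (w, z) ∈ H ∧ z ≠ σ v ∧ (v, z) ∉ H).card : ℤ) := step3
      _ ≤ (T.card : ℤ) := by exact_mod_cast step2.trans step1
  have hS2 : (S.card : ℤ) ≤ (D : ℤ) * D := by exact_mod_cast hSbound
  have hWnn : (0 : ℤ) ≤ (W.card : ℤ) := Int.natCast_nonneg _
  have hδ' : (3 : ℤ) ≤ (δ : ℤ) := by exact_mod_cast hδ
  have h1 : ((δ : ℤ) - 3) * ((N : ℤ) - D - 1) ≤ ((δ : ℤ) - 3) * W.card :=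
    mul_le_mul_of_nonneg_left hWcard (by linarith)
  have h2 : ((δ : ℤ) - 3) * W.card ≤ ((δ : ℤ) - 1) * W.card := by nlinarith
  have hDD : (D : ℤ) ^ 2 = (D : ℤ) * D := sq (D : ℤ)
  linarith
end
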